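/- arXiv:1707.05002 — 5 statements merged into one kernel-verified Lean document; each statement's English description precedes it below -/
import Mathlib

section
/- Let n be an odd integer and p an odd prime with p ∣ n. If q ≥ 3 is an integer with n ≡ -1 (mod q) and p ≡ 1 (mod q), then gcd(n²-1, p-1) - gcd(n-1, p-1) > 0. -/
theorem stmt_0 (n p q : ℕ) (hn : Odd n) (hp : p.Prime) (hpodd : Odd p)
    (hpn : p ∣ n) (hq : 3 ≤ q) (hnq : q ∣ n + 1) (hpq : q ∣ p - 1) :
    0 < Nat.gcd (n ^ 2 - 1) (p - 1) - Nat.gcd (n - 1) (p - 1) := by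
  have hp3 : 3 ≤ p := by
    rcases hpodd with ⟨k, hk⟩
    have := hp.two_le
    omega
  have hn0 : 0 < n := by
    rcases hn with ⟨k, hk⟩; omega
  have hn3 : 3 ≤ n := le_trans hp3 (Nat.le_of_dvd hn0 hpn)
  have key : n ^ 2 - 1 = (n + 1) * (n - 1) := by
    obtain ⟨k, rfl⟩ := Nat.exists_eq_add_of_le hn3
    have h1 : (3 + k) ^ 2 = k * k + 6 * k + 9 := by ring
    have h2 : (3 + k + 1) * (3 + k - 1) = k * k + 6 * k + 8 := by
      have : 3 + k - 1 = 2 + k := by omega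
      rw [this]; ring
    omega
  have hd12 : Nat.gcd (n - 1) (p - 1) ∣ Nat.gcd (n ^ 2 - 1) (p - 1) := by
    refine Nat.dvd_gcd ((Nat.gcd_dvd_left _ _).trans ?_) (Nat.gcd_dvd_right _ _)
    rw [key]; exact dvd_mul_left _ _
  have hd2pos : 0 < Nat.gcd (n ^ 2 - 1) (p - 1) :=
    Nat.gcd_pos_of_pos_right _ (by omega)
  have hwit : ∃ m, m ∣ Nat.gcd (n ^ 2 - 1) (p - 1) ∧ ¬ m ∣ Nat.gcd (n - 1) (p - 1) := by
    by_cases hodd : ∃ r, r.Prime ∧ Odd r ∧ r ∣ q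
    · obtain ⟨r, hr, hro, hrq⟩ := hodd
      refine ⟨r, Nat.dvd_gcd ?_ ((hrq.trans hpq)), ?_⟩
      · refine (hrq.trans hnq).trans ?_
        rw [key]; exact dvd_mul_right _ _
      · intro h
        have h1 : r ∣ n - 1 := h.trans (Nat.gcd_dvd_left _ _)
        have h2 : r ∣ n + 1 := hrq.trans hnq
        have h3 : r ∣ 2 := by
          have := Nat.dvd_sub h2 h1
          have he : n + 1 - (n - 1) = 2 := by omega
          rwa [he] at this
        have := Nat.le_of_dvd (by norm_num) h3
        rcases hro with ⟨j, hj⟩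
        have := hr.two_le
        omega
    · push_neg at hodd
      have h2q : ∀ r, r.Prime → r ∣ q → r = 2 := by
        intro r hr hrq
        rcases hr.eq_two_or_odd' with h | h
        · exact h
        · exact absurd hrq (hodd r hr h)
      obtain ⟨k, hq2⟩ : ∃ k, q = 2 ^ k :=
        ⟨_, Nat.eq_prime_pow_of_unique_prime_dvd (by omega) (fun {r} hr hrq => h2q r hr hrq)⟩
      have hk2 : 2 ≤ k := by
        by_contra hk
        interval_cases k <;> omega
      have h4q : 4 ∣ q := by
        rw [hq2]
        have : (4 : ℕ) = 2 ^ 2 := by norm_num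
        rw [this]
        exact pow_dvd_pow 2 hk2
      refine ⟨4, Nat.dvd_gcd ?_ (h4q.trans hpq), ?_⟩
      · refine (h4q.trans hnq).trans ?_
        rw [key]; exact dvd_mul_right _ _
      · intro h
        have h1 : (4:ℕ) ∣ n - 1 := h.trans (Nat.gcd_dvd_left _ _)
        have h2 : (4:ℕ) ∣ n + 1 := h4q.trans hnq
        have h3 : (4:ℕ) ∣ 2 := by
          have := Nat.dvd_sub h2 h1
          have he : n + 1 - (n - 1) = 2 := by omega
          rwa [he] at this
        have := Nat.le_of_dvd (by norm_num) h3
        omega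
  obtain ⟨m, hm1, hm2⟩ := hwit
  have hne : Nat.gcd (n - 1) (p - 1) ≠ Nat.gcd (n ^ 2 - 1) (p - 1) := by
    intro h; exact hm2 (h ▸ hm1)
  have := Nat.le_of_dvd hd2pos hd12
  omega
end

section
/- Let n be an odd integer and p an odd prime with p ∣ n. If q ≥ 3 is an integer with n ≡ -1 (mod q) and p ≡ -1 (mod q), then gcd(n²-1, p²-1, n-p) - gcd(n-1, p-1) > 0. -/
theorem stmt_1 (n p q : ℕ) (hn : Odd n) (hp : p.Prime) (hpodd : Odd p)
    (hpn : p ∣ n) (hlt : p < n) (hq : 3 ≤ q) (hnq : q ∣ n + 1) (hpq : q ∣ p + 1) :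
    0 < Nat.gcd (Nat.gcd (n ^ 2 - 1) (p ^ 2 - 1)) (n - p) - Nat.gcd (n - 1) (p - 1) := by
  have hp3 : 3 ≤ p := by
    obtain ⟨k, hk⟩ := hpodd; have := hp.two_le; omega
  have hn1 : 1 ≤ n := by omega
  have hp1 : 1 ≤ p := by omega
  have fac : ∀ k : ℕ, 1 ≤ k → k ^ 2 - 1 = (k - 1) * (k + 1) := by
    intro k hk
    have h2 : 1 ≤ k ^ 2 := Nat.one_le_pow _ _ hk
    zify [hk, h2]; ring
  have hnfac := fac n hn1
  have hpfac := fac p hp1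
  set d := Nat.gcd (n - 1) (p - 1) with hd
  set G := Nat.gcd (Nat.gcd (n ^ 2 - 1) (p ^ 2 - 1)) (n - p) with hG
  have hdG : d ∣ G := by
    apply Nat.dvd_gcd
    · apply Nat.dvd_gcd
      · rw [hnfac]; exact dvd_mul_of_dvd_left (Nat.gcd_dvd_left _ _) _
      · rw [hpfac]; exact dvd_mul_of_dvd_left (Nat.gcd_dvd_right _ _) _
    · have : n - p = (n - 1) - (p - 1) := by omega
      rw [this]
      exact Nat.dvd_sub (Nat.gcd_dvd_left _ _) (Nat.gcd_dvd_right _ _)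
  have hqG : q ∣ G := by
    apply Nat.dvd_gcd
    · apply Nat.dvd_gcd
      · rw [hnfac]; exact dvd_mul_of_dvd_right hnq _
      · rw [hpfac]; exact dvd_mul_of_dvd_right hpq _
    · have : n - p = (n + 1) - (p + 1) := by omega
      rw [this]
      exact Nat.dvd_sub hnq hpq
  have hGpos : 0 < G := Nat.gcd_pos_of_pos_right _ (by omega)
  have hne : G ≠ d := by
    intro h
    have hq1 : q ∣ n - 1 := (h ▸ hqG).trans (Nat.gcd_dvd_left _ _)
    have : q ∣ 2 := by
      have : (2 : ℕ) = (n + 1) - (n - 1) := by omega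
      rw [this]; exact Nat.dvd_sub hnq hq1
    have := Nat.le_of_dvd (by norm_num) this
    omega
  have := Nat.le_of_dvd hGpos hdG
  omega
end

section
/- Let n be a squarefree positive integer and define λ₂(n) = lcm over primes p dividing n of (p²-1). Let k = λ₂(n) / gcd(λ₂(n), n²-1). Then k · ∏_{p ∣ n} gcd(p²-1, n²-1) divides ∏_{p ∣ n} (p²-1), where the products run over the distinct prime divisors of n. -/
/-!
For `x m` with `m ≠ 0`, the quotient `x / gcd x m` is the least `d` with `x ∣ d * m`.
Writing `f p = p² - 1` and `g p = gcd (f p) (n² - 1)`, every `f p` divides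
`(∏ f / g) * (n² - 1)`, hence so does `λ₂(n) = lcm f`, so `k = λ₂(n) / gcd (λ₂(n)) (n² - 1)`
divides `∏ f / g`. Multiplying by `∏ g` gives the claim.
-/

theorem Nat.dvd_div_gcd_mul (x m : ℕ) : x ∣ x / x.gcd m * m := by
  conv_lhs => rw [← Nat.div_mul_cancel (Nat.gcd_dvd_left x m)]
  exact Nat.mul_dvd_mul_left _ (Nat.gcd_dvd_right x m)

theorem Nat.div_gcd_dvd_of_dvd_mul {x m d : ℕ} (hm : m ≠ 0) (h : x ∣ d * m) :
    x / x.gcd m ∣ d := by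
  have hg : 0 < x.gcd m := Nat.gcd_pos_of_pos_right x (Nat.pos_of_ne_zero hm)
  refine (Nat.coprime_div_gcd_div_gcd hg).dvd_of_dvd_mul_right ?_
  rw [← Nat.mul_div_assoc d (Nat.gcd_dvd_right x m)]
  exact Nat.div_dvd_div (Nat.gcd_dvd_left x m) h

theorem Finset.lcm_div_gcd_dvd_prod_div_gcd {ι : Type*} (s : Finset ι) (f : ι → ℕ) {m : ℕ}
    (hm : m ≠ 0) : s.lcm f / (s.lcm f).gcd m ∣ ∏ i ∈ s, f i / (f i).gcd m := by
  refine Nat.div_gcd_dvd_of_dvd_mul hm (Finset.lcm_dvd fun i hi => ?_)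
  exact (Nat.dvd_div_gcd_mul (f i) m).trans
    (Nat.mul_dvd_mul_right (Finset.dvd_prod_of_mem (fun i => f i / (f i).gcd m) hi) m)

theorem stmt_3_general (n : ℕ) (hn : 1 < n)
    (lam2 : ℕ) (hlam2 : lam2 = n.primeFactors.lcm (fun p => p ^ 2 - 1))
    (k : ℕ) (hk : k = lam2 / Nat.gcd lam2 (n ^ 2 - 1)) :
    k * ∏ p ∈ n.primeFactors, Nat.gcd (p ^ 2 - 1) (n ^ 2 - 1) ∣
      ∏ p ∈ n.primeFactors, (p ^ 2 - 1) := by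
  subst hlam2 hk
  have hm : n ^ 2 - 1 ≠ 0 := by
    have : 1 < n ^ 2 := Nat.one_lt_pow two_ne_zero hn
    omega
  calc _ ∣ (∏ p ∈ n.primeFactors, (p ^ 2 - 1) / Nat.gcd (p ^ 2 - 1) (n ^ 2 - 1)) *
          ∏ p ∈ n.primeFactors, Nat.gcd (p ^ 2 - 1) (n ^ 2 - 1) :=
        Nat.mul_dvd_mul_right (n.primeFactors.lcm_div_gcd_dvd_prod_div_gcd _ hm) _
    _ = ∏ p ∈ n.primeFactors, (p ^ 2 - 1) := by
        rw [← Finset.prod_mul_distrib]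
        exact Finset.prod_congr rfl fun p _ => Nat.div_mul_cancel (Nat.gcd_dvd_left _ _)

theorem stmt_3 (n : ℕ) (hn : 1 < n) (hsf : Squarefree n)
    (lam2 : ℕ) (hlam2 : lam2 = n.primeFactors.lcm (fun p => p ^ 2 - 1))
    (k : ℕ) (hk : k = lam2 / Nat.gcd lam2 (n ^ 2 - 1)) :
    k * ∏ p ∈ n.primeFactors, Nat.gcd (p ^ 2 - 1) (n ^ 2 - 1) ∣
      ∏ p ∈ n.primeFactors, (p ^ 2 - 1) :=
  stmt_3_general n hn lam2 hlam2 k hk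
end

section
/- Let n = p·s where p is prime, gcd(p, s) = 1, and s > 1. Suppose that for every odd prime ℓ dividing p²-1 we have s ≢ -p^{-1} (mod ℓ), and writing p ≡ 1 + 2^r (mod 2^{r+1}) we have s ≡ 1 + 2^r (mod 2^{r+1}). Then gcd(p²-1, n²-1, n-p) = gcd(n-1, p-1) and gcd(n²-1, p-1) = gcd(n-1, p-1). -/
/-- If `x ∣ u * v`, no odd prime factor of `x` divides `v`, and every power of 2
dividing `x` divides `u`, then `x ∣ u`. -/
lemma aux_dvd_left (x u v : ℕ) (hu : u ≠ 0) (hx : x ≠ 0)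
    (hdvd : x ∣ u * v)
    (hoddq : ∀ q : ℕ, q.Prime → Odd q → q ∣ x → ¬ q ∣ v)
    (h2 : ∀ k : ℕ, 2 ^ k ∣ x → 2 ^ k ∣ u) :
    x ∣ u := by
  rw [← Nat.factorization_le_iff_dvd hx hu, Finsupp.le_def]
  intro q
  by_cases hq : q.Prime
  · by_cases hq2 : q = 2
    · subst hq2
      have h1 : 2 ^ x.factorization 2 ∣ u := h2 _ (Nat.ordProj_dvd x 2)
      exact (hq.pow_dvd_iff_le_factorization hu).mp h1
    · rcases Nat.eq_zero_or_pos (x.factorization q) with h0 | hpos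
      · simp [h0]
      · have hqodd : Odd q := hq.odd_of_ne_two hq2
        have hqx : q ∣ x :=
          dvd_trans (dvd_pow_self q (by omega : x.factorization q ≠ 0)) (Nat.ordProj_dvd x q)
        have hqv : ¬ q ∣ v := hoddq q hq hqodd hqx
        have hcop : Nat.Coprime (q ^ x.factorization q) v :=
          Nat.Coprime.pow_left _ ((Nat.Prime.coprime_iff_not_dvd hq).mpr hqv)
        have : q ^ x.factorization q ∣ u :=
          hcop.dvd_of_dvd_mul_right (dvd_trans (Nat.ordProj_dvd x q) hdvd)
        exact (hq.pow_dvd_iff_le_factorization hu).mp this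
  · simp [Nat.factorization_eq_zero_of_not_prime _ hq]

theorem stmt_14 (p s r n : ℕ) (hp : p.Prime) (hpodd : Odd p) (hcop : Nat.gcd p s = 1)
    (hs : 1 < s) (hn : n = p * s) (hr : 1 ≤ r)
    (hp2 : p % 2 ^ (r + 1) = (1 + 2 ^ r) % 2 ^ (r + 1))
    (hs2 : s % 2 ^ (r + 1) = (1 + 2 ^ r) % 2 ^ (r + 1))
    (hodd : ∀ ℓ : ℕ, ℓ.Prime → Odd ℓ → ℓ ∣ p ^ 2 - 1 → ¬ ℓ ∣ s * p + 1) :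
    Nat.gcd (Nat.gcd (p ^ 2 - 1) (n ^ 2 - 1)) (n - p) = Nat.gcd (n - 1) (p - 1) ∧
    Nat.gcd (n ^ 2 - 1) (p - 1) = Nat.gcd (n - 1) (p - 1) := by
  -- basic bounds
  have hp3 : 3 ≤ p := by
    have h2 := hp.two_le
    rcases Nat.lt_or_ge p 3 with h | h
    · interval_cases p
      · exact absurd hpodd (by decide)
    · exact h
  have hnp2 : p * 2 ≤ n := by rw [hn]; exact Nat.mul_le_mul_left p hs
  have hT1 : 1 ≤ 2 ^ r := Nat.one_le_two_pow
  have hT2 : 2 ≤ 2 ^ r := by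
    calc 2 = 2 ^ 1 := by norm_num
    _ ≤ 2 ^ r := Nat.pow_le_pow_right (by norm_num) hr
  have hM : 2 ^ (r + 1) = 2 * 2 ^ r := by rw [pow_succ]; ring
  have hlt : 1 + 2 ^ r < 2 ^ (r + 1) := by omega
  have hp2' : p % 2 ^ (r + 1) = 1 + 2 ^ r := by rw [hp2, Nat.mod_eq_of_lt hlt]
  have hs2' : s % 2 ^ (r + 1) = 1 + 2 ^ r := by rw [hs2, Nat.mod_eq_of_lt hlt]
  -- 2-adic facts
  have hpr : 2 ^ r ∣ p - 1 := by
    have hd := Nat.div_add_mod p (2 ^ (r + 1))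
    have hexp : 2 ^ r * (2 * (p / 2 ^ (r + 1)) + 1) = 2 ^ (r + 1) * (p / 2 ^ (r + 1)) + 2 ^ r := by
      rw [hM]; ring
    exact ⟨2 * (p / 2 ^ (r + 1)) + 1, by omega⟩
  have hpnr : ¬ 2 ^ (r + 1) ∣ p - 1 := by
    intro h
    have hd := Nat.div_add_mod p (2 ^ (r + 1))
    have h1 : p - 1 = 2 ^ (r + 1) * (p / 2 ^ (r + 1)) + 2 ^ r := by omega
    have h2 : 2 ^ (r + 1) ∣ 2 ^ r := (Nat.dvd_add_right ⟨_, rfl⟩).mp (h1 ▸ h)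
    exact absurd (Nat.le_of_dvd (by omega) h2) (by omega)
  have hsnr : ¬ 2 ^ (r + 1) ∣ s - 1 := by
    intro h
    have hd := Nat.div_add_mod s (2 ^ (r + 1))
    have h1 : s - 1 = 2 ^ (r + 1) * (s / 2 ^ (r + 1)) + 2 ^ r := by omega
    have h2 : 2 ^ (r + 1) ∣ 2 ^ r := (Nat.dvd_add_right ⟨_, rfl⟩).mp (h1 ▸ h)
    exact absurd (Nat.le_of_dvd (by omega) h2) (by omega)
  have hn1 : 2 ^ (r + 1) ∣ n - 1 := by
    have hmod : n % 2 ^ (r + 1) = 1 := by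
      rw [hn, Nat.mul_mod, hp2', hs2']
      have hid : (1 + 2 ^ r) * (1 + 2 ^ r) = 2 ^ (r + 1) * (1 + 2 ^ (r - 1)) + 1 := by
        have h2r : 2 ^ r = 2 * 2 ^ (r - 1) := by
          rw [← pow_succ']
          congr 1
          omega
        rw [hM, h2r]; ring
      rw [hid, Nat.mul_add_mod]
      exact Nat.mod_eq_of_lt (by omega)
    have hd := Nat.div_add_mod n (2 ^ (r + 1))
    exact ⟨n / 2 ^ (r + 1), by omega⟩
  -- products
  have hpn1 : 2 ^ r ∣ n - 1 := dvd_trans (pow_dvd_pow 2 (by omega)) hn1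
  have hnsq : n ^ 2 - 1 = (n - 1) * (n + 1) := by
    rw [show n ^ 2 - 1 = n ^ 2 - 1 ^ 2 by norm_num, Nat.sq_sub_sq, mul_comm]
  have hpsq : p ^ 2 - 1 = (p - 1) * (p + 1) := by
    rw [show p ^ 2 - 1 = p ^ 2 - 1 ^ 2 by norm_num, Nat.sq_sub_sq, mul_comm]
  have hnpprod : n - p = p * (s - 1) := by rw [hn, Nat.mul_sub, Nat.mul_one]
  have hsub1 : (s - 1) * p + (p + 1) = s * p + 1 := by
    rw [Nat.sub_mul, Nat.one_mul]
    have : p ≤ s * p := Nat.le_mul_of_pos_left p (by omega)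
    omega
  -- odd prime exclusions
  have hq_s1_not_p1 : ∀ q : ℕ, q.Prime → Odd q → q ∣ s - 1 → ¬ q ∣ p + 1 := by
    intro q hq hqo hqs hqp
    refine hodd q hq hqo (hpsq ▸ Dvd.dvd.mul_left hqp (p - 1)) ?_
    have h1 : q ∣ (s - 1) * p + (p + 1) := Dvd.dvd.add (hqs.mul_right p) hqp
    rwa [hsub1] at h1
  have hq_p1_not_n1 : ∀ q : ℕ, q.Prime → Odd q → q ∣ p - 1 → ¬ q ∣ n + 1 := by
    intro q hq hqo hq1 hqn
    refine hodd q hq hqo (hpsq ▸ Dvd.dvd.mul_right hq1 (p + 1)) ?_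
    rwa [hn, mul_comm] at hqn
  have hq_s1_not_n1 : ∀ q : ℕ, q.Prime → Odd q → q ∣ s - 1 → ¬ q ∣ n + 1 := by
    intro q hq hqo hqs hqn
    have h1 : q ∣ (s - 1) * p := hqs.mul_right p
    have h2 : q ∣ p + 1 := by
      have h3 : q ∣ s * p + 1 := by rwa [hn, mul_comm] at hqn
      rw [← hsub1] at h3
      exact (Nat.dvd_add_right h1).mp h3
    exact hq_s1_not_p1 q hq hqo hqs h2
  have hpn2 : ¬ p ∣ n ^ 2 - 1 := by
    intro h
    have h1 : p ∣ n ^ 2 := by rw [hn]; exact Dvd.dvd.pow (Dvd.intro s rfl) (by norm_num)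
    have h2 : p ∣ 1 := by
      have := Nat.dvd_sub h1 h
      rwa [Nat.sub_sub_self (Nat.one_le_pow 2 n (by omega))] at this
    exact absurd (Nat.le_of_dvd one_pos h2) (by omega)
  -- nonzeroness
  have hn1ne : n - 1 ≠ 0 := by omega
  have hp1ne : p - 1 ≠ 0 := by omega
  have hnsqne : n ^ 2 - 1 ≠ 0 := by rw [hnsq]; exact Nat.mul_ne_zero (by omega) (by omega)
  have hpsqne : p ^ 2 - 1 ≠ 0 := by rw [hpsq]; exact Nat.mul_ne_zero (by omega) (by omega)
  have hnpne : n - p ≠ 0 := by omega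
  set g := Nat.gcd (n - 1) (p - 1) with hg
  set D := Nat.gcd (Nat.gcd (p ^ 2 - 1) (n ^ 2 - 1)) (n - p) with hD
  set d := Nat.gcd (n ^ 2 - 1) (p - 1) with hd
  have hDne : D ≠ 0 := by
    simp only [hD, ne_eq, Nat.gcd_eq_zero_iff, not_and_or]
    right; exact hnpne
  have hdne : d ≠ 0 := by
    simp only [hd, ne_eq, Nat.gcd_eq_zero_iff, not_and_or]
    right; exact hp1ne
  -- facts about odd prime divisors of D
  have hD_s1 : ∀ q : ℕ, q.Prime → q ∣ D → q ≠ p → q ∣ s - 1 := by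
    intro q hq hqD hqp
    have h1 : q ∣ p * (s - 1) := hnpprod ▸ dvd_trans hqD (Nat.gcd_dvd_right _ _)
    rcases (Nat.Prime.dvd_mul hq).mp h1 with h | h
    · exact absurd ((Nat.prime_dvd_prime_iff_eq hq hp).mp h) hqp
    · exact h
  have hD_ne_p : ∀ q : ℕ, q ∣ D → q ≠ p ∨ ¬ q ∣ D := by
    intro q hqD
    left
    intro hqp
    subst hqp
    exact hpn2 (dvd_trans hqD (dvd_trans (Nat.gcd_dvd_left _ _) (Nat.gcd_dvd_right _ _)))
  -- 2-power bounds
  have hD2 : ∀ k : ℕ, 2 ^ k ∣ D → 2 ^ k ∣ s - 1 := by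
    intro k hk
    have h1 : 2 ^ k ∣ p * (s - 1) := hnpprod ▸ dvd_trans hk (Nat.gcd_dvd_right _ _)
    have hcop2 : Nat.Coprime (2 ^ k) p :=
      Nat.Coprime.pow_left _ ((Nat.coprime_two_left).mpr hpodd)
    exact hcop2.dvd_of_dvd_mul_left h1
  have hD2k : ∀ k : ℕ, 2 ^ k ∣ D → k ≤ r := by
    intro k hk
    by_contra hkr
    exact hsnr (dvd_trans (pow_dvd_pow 2 (by omega)) (hD2 k hk))
  -- D ∣ n - 1
  have hDn1 : D ∣ n - 1 := by
    apply aux_dvd_left D (n - 1) (n + 1) hn1ne hDne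
    · rw [← hnsq]; exact dvd_trans (Nat.gcd_dvd_left _ _) (Nat.gcd_dvd_right _ _)
    · intro q hq hqo hqD
      have hqp : q ≠ p := by
        rcases hD_ne_p q hqD with h | h
        · exact h
        · exact absurd hqD h
      exact hq_s1_not_n1 q hq hqo (hD_s1 q hq hqD hqp)
    · intro k hk
      exact dvd_trans (pow_dvd_pow 2 (by have := hD2k k hk; omega)) hn1
  -- D ∣ p - 1
  have hDp1 : D ∣ p - 1 := by
    apply aux_dvd_left D (p - 1) (p + 1) hp1ne hDne
    · rw [← hpsq]; exact dvd_trans (Nat.gcd_dvd_left _ _) (Nat.gcd_dvd_left _ _)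
    · intro q hq hqo hqD
      have hqp : q ≠ p := by
        rcases hD_ne_p q hqD with h | h
        · exact h
        · exact absurd hqD h
      exact hq_s1_not_p1 q hq hqo (hD_s1 q hq hqD hqp)
    · intro k hk
      exact dvd_trans (pow_dvd_pow 2 (hD2k k hk)) hpr
  -- d ∣ n - 1
  have hdn1 : d ∣ n - 1 := by
    apply aux_dvd_left d (n - 1) (n + 1) hn1ne hdne
    · rw [← hnsq]; exact Nat.gcd_dvd_left _ _
    · intro q hq hqo hqd
      exact hq_p1_not_n1 q hq hqo (dvd_trans hqd (Nat.gcd_dvd_right _ _))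
    · intro k hk
      have h1 : 2 ^ k ∣ p - 1 := dvd_trans hk (Nat.gcd_dvd_right _ _)
      have hkr : k ≤ r := by
        by_contra hkr
        exact hpnr (dvd_trans (pow_dvd_pow 2 (by omega)) h1)
      exact dvd_trans (pow_dvd_pow 2 (by omega)) hn1
  -- easy directions
  have hg_n1 : g ∣ n - 1 := Nat.gcd_dvd_left _ _
  have hg_p1 : g ∣ p - 1 := Nat.gcd_dvd_right _ _
  have hg_nsq : g ∣ n ^ 2 - 1 := hnsq ▸ Dvd.dvd.mul_right hg_n1 (n + 1)
  have hg_psq : g ∣ p ^ 2 - 1 := hpsq ▸ Dvd.dvd.mul_right hg_p1 (p + 1)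
  have hg_np : g ∣ n - p := by
    have h1 := Nat.dvd_sub hg_n1 hg_p1
    rwa [show n - 1 - (p - 1) = n - p by omega] at h1
  constructor
  · exact Nat.dvd_antisymm (Nat.dvd_gcd hDn1 hDp1)
      (Nat.dvd_gcd (Nat.dvd_gcd hg_psq hg_nsq) hg_np)
  · exact Nat.dvd_antisymm (Nat.dvd_gcd hdn1 (Nat.gcd_dvd_right _ _))
      (Nat.dvd_gcd hg_nsq hg_p1)
end

section
/- For any real c with 1/2 ≤ c < 1 and any positive integer n, the multiplicative sum ∑_{m : p ∣ m ⟹ (p-1) ∣ n} m^{-c} equals the Euler product ∏_{p prime, (p-1) ∣ n} (1 - p^{-c})^{-1}, and each factor satisfies (1-p^{-c})^{-1} ≤ 4. -/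
noncomputable def rpowHom (c : ℝ) : ℕ →* ℝ where
  toFun m := ((m : ℕ) : ℝ) ^ (-c)
  map_one' := by simp
  map_mul' m k := by
    push_cast
    exact Real.mul_rpow (Nat.cast_nonneg m) (Nat.cast_nonneg k)

lemma rpow_bound {c : ℝ} (hc1 : 1 / 2 ≤ c) {p : ℕ} (hp : p.Prime) :
    (p : ℝ) ^ (-c) ≤ 3 / 4 := by
  have h2 : (2 : ℝ) ≤ (p : ℝ) := by exact_mod_cast hp.two_le
  have hc0 : (0 : ℝ) < c := lt_of_lt_of_le (by norm_num) hc1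
  have h1 : (p : ℝ) ^ (-c) ≤ (2 : ℝ) ^ (-c) := by
    rw [Real.rpow_neg (by norm_num), Real.rpow_neg (by positivity)]
    apply inv_anti₀ (by positivity)
    exact Real.rpow_le_rpow (by norm_num) h2 hc0.le
  have h2' : (2 : ℝ) ^ (-c) ≤ (2 : ℝ) ^ (-(1/2) : ℝ) :=
    Real.rpow_le_rpow_of_exponent_le (by norm_num) (by linarith)
  have h3 : (2 : ℝ) ^ (-(1/2) : ℝ) ≤ 3 / 4 := by
    rw [Real.rpow_neg (by norm_num), ← Real.sqrt_eq_rpow]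
    rw [inv_le_iff_one_le_mul₀ (by positivity)]
    nlinarith [Real.sq_sqrt (by norm_num : (0:ℝ) ≤ 2), Real.sqrt_nonneg 2,
      (Real.le_sqrt (by norm_num) (by norm_num)).mpr (by norm_num : ((4:ℝ)/3)^2 ≤ 2)]
  linarith

theorem stmt_18 (c : ℝ) (hc1 : 1 / 2 ≤ c) (hc2 : c < 1) (n : ℕ) (hn : 0 < n) :
    (∑' m : {m : ℕ // 0 < m ∧ ∀ p : ℕ, p.Prime → p ∣ m → (p - 1) ∣ n},
        ((m : ℕ) : ℝ) ^ (-c)) =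
      ∏ p ∈ (Finset.range (n + 2)).filter (fun p => p.Prime ∧ (p - 1) ∣ n),
        (1 - (p : ℝ) ^ (-c))⁻¹ ∧
    ∀ p : ℕ, p.Prime → (p - 1) ∣ n → (1 - (p : ℝ) ^ (-c))⁻¹ ≤ 4 := by
  have hc0 : (0 : ℝ) < c := lt_of_lt_of_le (by norm_num) hc1
  have hbound : ∀ p : ℕ, p.Prime → (1 - (p : ℝ) ^ (-c))⁻¹ ≤ 4 := by
    intro p hp
    have h1 := rpow_bound hc1 hp
    have h2 : (0:ℝ) < 1 - (p : ℝ) ^ (-c) := by linarith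
    rw [inv_le_iff_one_le_mul₀ h2]
    linarith
  set s := (Finset.range (n + 2)).filter (fun p => p.Prime ∧ (p - 1) ∣ n) with hs
  have hlt : ∀ {p : ℕ}, p.Prime → ‖rpowHom c p‖ < 1 := by
    intro p hp
    have h1 := rpow_bound hc1 hp
    have h0 : (0:ℝ) ≤ (p : ℝ) ^ (-c) := Real.rpow_nonneg (Nat.cast_nonneg p) _
    simp only [rpowHom, MonoidHom.coe_mk, OneHom.coe_mk, Real.norm_eq_abs, abs_of_nonneg h0]
    linarith
  have key := (EulerProduct.summable_and_hasSum_factoredNumbers_prod_filter_prime_geometric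
    hlt s).2.tsum_eq
  have hsf : s.filter Nat.Prime = s := by
    apply Finset.filter_true_of_mem
    intro p hp
    simp only [hs, Finset.mem_filter] at hp
    exact hp.2.1
  have hset : ∀ m : ℕ, m ∈ Nat.factoredNumbers s ↔
      (0 < m ∧ ∀ p : ℕ, p.Prime → p ∣ m → (p - 1) ∣ n) := by
    intro m
    rw [Nat.mem_factoredNumbers']
    constructor
    · intro H
      have hm0 : m ≠ 0 := by
        intro h0
        obtain ⟨q, hq1, hq2⟩ := Nat.exists_infinite_primes (n + 2)
        have := H q hq2 (h0 ▸ dvd_zero q)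
        simp only [hs, Finset.mem_filter, Finset.mem_range] at this
        omega
      refine ⟨Nat.pos_of_ne_zero hm0, fun p hp hpm => ?_⟩
      have := H p hp hpm
      simp only [hs, Finset.mem_filter] at this
      exact this.2.2
    · rintro ⟨hm0, H⟩ p hp hpm
      have hd := H p hp hpm
      have hle : p - 1 ≤ n := Nat.le_of_dvd hn hd
      have h2 := hp.two_le
      simp only [hs, Finset.mem_filter, Finset.mem_range]
      exact ⟨by omega, hp, hd⟩
  refine ⟨?_, fun p hp _ => hbound p hp⟩
  calc (∑' m : {m : ℕ // 0 < m ∧ ∀ p : ℕ, p.Prime → p ∣ m → (p - 1) ∣ n},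
        ((m : ℕ) : ℝ) ^ (-c))
      = ∑' m : Nat.factoredNumbers s, rpowHom c m :=
        (Equiv.subtypeEquivRight fun m => (hset m).symm).tsum_eq
          (fun m : Nat.factoredNumbers s => rpowHom c m)
    _ = ∏ p ∈ s.filter Nat.Prime, (1 - rpowHom c p)⁻¹ := key
    _ = ∏ p ∈ s, (1 - (p : ℝ) ^ (-c))⁻¹ := by rw [hsf]; rfl
end
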